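/- A real (p,p)-form u on a complex n-dimensional vector space V is Hermitian positive if and only if the map (β,η) ↦ (coefficient of u ∧ i^{q²} β ∧ η̄ with respect to the standard positive volume form), for β,η ∈ Λ^{q,0}V^∨ with q = n−p, defines a positive semidefinite Hermitian sesquilinear form on Λ^{q,0}V^∨. -/

import Mathlib

open Complex BigOperators

noncomputable section

/-- The space of ℂ-valued real-alternating `k`-forms on a complex vector space `V`.
(`(p,q)`-forms with `p + q = k` form distinguished subspaces of this space.) -/
abbrev AltForm (V : Type*) [AddCommGroup V] [Module ℂ V] (k : ℕ) : Type _ :=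
  AlternatingMap ℝ V ℂ (Fin k)

namespace AltForm

variable {V : Type*} [AddCommGroup V] [Module ℂ V]

/-- The wedge product of two forms. -/
def wedge {p q : ℕ} (u : AltForm V p) (v : AltForm V q) : AltForm V (p + q) :=
  ((TensorProduct.lift (LinearMap.mul ℝ ℂ)).compAlternatingMap
    (u.domCoprod v)).domDomCongr finSumFinEquiv

/-- The conjugate of a form. -/
def conj {k : ℕ} (u : AltForm V k) : AltForm V k :=
  Complex.conjAe.toLinearMap.compAlternatingMap u

/-- Reindexing a form along an equality of degrees. -/
def castForm {k l : ℕ} (h : k = l) (u : AltForm V k) : AltForm V l :=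
  u.domDomCongr (finCongr h)

/-- Restriction of scalars of a ℂ-alternating map to an ℝ-alternating map. -/
def ofComplexAlt {p : ℕ} (u : AlternatingMap ℂ V ℂ (Fin p)) : AltForm V p :=
  { toMultilinearMap := u.toMultilinearMap.restrictScalars ℝ,
    map_eq_zero_of_eq' := u.map_eq_zero_of_eq' }

/-- The wedge product `f 0 ∧ f 1 ∧ ⋯ ∧ f (p-1)` of a family of ℂ-linear forms,
given by the determinant formula. -/
def wedgeFamily {p : ℕ} (f : Fin p → (V →ₗ[ℂ] ℂ)) : AltForm V p :=
  ofComplexAlt (Matrix.detRowAlternating.compLinearMap (LinearMap.pi f))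

/-- A `(p,0)`-form is decomposable if it is a wedge product of `p` elements of `Λ^{1,0}V^∨`,
i.e. of ℂ-linear functionals. -/
def IsDecomposable {p : ℕ} (β : AltForm V p) : Prop :=
  ∃ f : Fin p → (V →ₗ[ℂ] ℂ), β = wedgeFamily f

/-- `u` is of type `(p,q)`: pulling back by scalar multiplication by `c` acts by
`c ^ p * c̄ ^ q`.  Among real-alternating `(p+q)`-forms this characterizes the forms in
`Λ^{p,q} V^∨`. -/
def IsTypeForm (p q : ℕ) (u : AltForm V (p + q)) : Prop :=
  ∀ (c : ℂ) (v : Fin (p + q) → V),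
    u (fun i => c • v i) = c ^ p * (starRingEnd ℂ) c ^ q * u v

/-- The standard positive volume form
`i^{n²} (e₁^∨∧⋯∧eₙ^∨) ∧ (ē₁^∨∧⋯∧ēₙ^∨) = i e₁^∨∧ē₁^∨ ∧ ⋯ ∧ i eₙ^∨∧ēₙ^∨`
associated with a basis. -/
def stdVol {n : ℕ} (b : Module.Basis (Fin n) ℂ V) : AltForm V (n + n) :=
  (Complex.I ^ (n ^ 2)) •
    wedge (wedgeFamily fun i => b.coord i) (conj (wedgeFamily fun i => b.coord i))

/-- A `(n,n)`-form is a positive volume form if it is a nonnegative real multiple of the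
standard volume form of a basis. -/
def IsPosVolume {n : ℕ} (b : Module.Basis (Fin n) ℂ V) (ν : AltForm V (n + n)) : Prop :=
  ∃ τ : ℝ, 0 ≤ τ ∧ ν = τ • stdVol b

/-- A complex number is a nonnegative real. -/
def IsNonnegReal (z : ℂ) : Prop := 0 ≤ z.re ∧ z.im = 0

/-- `u` is real, i.e. `ū = u`. -/
def IsRealForm {k : ℕ} (u : AltForm V k) : Prop := conj u = u

/-- Auxiliary vector list for the mixed evaluation `u(w₁,…,w_p,w̄₁,…,w̄_p)`. -/
def mixedVec {p : ℕ} (w : Fin p → V) (j : Fin (p + p)) : V :=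
  if h : (j : ℕ) < p then w ⟨j, h⟩ else w ⟨(j : ℕ) - p, by have := j.isLt; omega⟩

/-- Auxiliary coefficients for the mixed evaluation. -/
def mixedCoeff (p : ℕ) (j : Fin (p + p)) : Bool → ℂ
  | true => if (j : ℕ) < p then -Complex.I else Complex.I
  | false => 1

/-- The evaluation `u(w₁,…,w_p,w̄₁,…,w̄_p)` of a `(p+p)`-form `u` on the `(1,0)`-parts of
`w₁,…,w_p` followed by the `(0,1)`-parts of `w₁,…,w_p`, expressed through the real
multilinear expansion `w^{1,0} = (w - i·(i•w))/2`, `w^{0,1} = (w + i·(i•w))/2`. -/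
def mixedEval {p : ℕ} (u : AltForm V (p + p)) (w : Fin p → V) : ℂ :=
  (4 ^ p : ℂ)⁻¹ * ∑ S : Fin (p + p) → Bool,
    (∏ j : Fin (p + p), mixedCoeff p j (S j)) *
      u (fun j => if S j then Complex.I • mixedVec w j else mixedVec w j)

/-- `u` is a positive `(p,p)`-form: tested against decomposable `(q,0)`-forms `β`
(`q = n - p`), the form `u ∧ i^{q²} β ∧ β̄` is a positive volume form. -/
def IsPosForm {n p : ℕ} (b : Module.Basis (Fin n) ℂ V) (hp : p ≤ n) (u : AltForm V (p + p)) : Prop :=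
  ∀ β : AltForm V (n - p), IsDecomposable β →
    IsPosVolume b (castForm (by omega)
      (wedge u ((Complex.I ^ ((n - p) ^ 2)) • wedge β (conj β))))

/-- `u` is a Hermitian positive `(p,p)`-form: tested against arbitrary `(q,0)`-forms `β`
(`q = n - p`), the form `u ∧ i^{q²} β ∧ β̄` is a positive volume form. -/
def IsHermPosForm {n p : ℕ} (b : Module.Basis (Fin n) ℂ V) (hp : p ≤ n) (u : AltForm V (p + p)) : Prop :=
  ∀ β : AltForm V (n - p), IsTypeForm (n - p) 0 β →
    IsPosVolume b (castForm (by omega)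
      (wedge u ((Complex.I ^ ((n - p) ^ 2)) • wedge β (conj β))))

/-- `u` is a strongly positive `(p,p)`-form: a finite sum `∑ i^{p²} α_s ∧ ᾱ_s` with each
`α_s` a decomposable `(p,0)`-form. -/
def IsStronglyPos {p : ℕ} (u : AltForm V (p + p)) : Prop :=
  ∃ (N : ℕ) (α : Fin N → AltForm V p), (∀ s, IsDecomposable (α s)) ∧
    u = ∑ s, (Complex.I ^ (p ^ 2)) • wedge (α s) (conj (α s))

/-- The Hermitian form `τ ↦ (-i)·θ(τ, τ̄)` associated with a `(1,1)`-form `θ`; in terms of the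
underlying real alternating form it is `τ ↦ θ(τ, i•τ)/2`. -/
def HForm (θ : AltForm V 2) (τ : V) : ℂ :=
  -Complex.I * ((Complex.I / 2) * θ ![τ, Complex.I • τ])

/-- Griffiths semipositivity of a matrix `Θ` of `(1,1)`-forms:
`∑ v_α v̄_β (-i)Θ_{αβ}(τ,τ̄) ≥ 0` for all `v ∈ ℂ^r` and `τ ∈ V`. -/
def GriffithsSemipos {r : ℕ} (Θ : Fin r → Fin r → AltForm V 2) : Prop :=
  ∀ (v : Fin r → ℂ) (τ : V),
    IsNonnegReal (∑ α, ∑ β, v α * (starRingEnd ℂ) (v β) * HForm (Θ α β) τ)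

/-- The list of arguments `e₁, i•e₁, …, eₙ, i•eₙ` built from a basis. -/
def stdArgs {n : ℕ} (b : Module.Basis (Fin n) ℂ V) : Fin (n + n) → V :=
  fun j =>
    if (j : ℕ) % 2 = 0 then b ⟨(j : ℕ) / 2, by have := j.isLt; omega⟩
    else Complex.I • b ⟨(j : ℕ) / 2, by have := j.isLt; omega⟩

end AltForm

open AltForm

/-- The coefficient (up to the fixed positive factor `stdVol b (stdArgs b) > 0`) of
`u ∧ i^{q²} β ∧ η̄` with respect to the standard positive volume form, computed by
evaluation at the standard arguments `e₁, i•e₁, …, eₙ, i•eₙ`. -/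
def hermCoeff {V : Type*} [AddCommGroup V] [Module ℂ V] {n p : ℕ} (hp : p ≤ n)
    (b : Module.Basis (Fin n) ℂ V) (u : AltForm V (p + p)) (β η : AltForm V (n - p)) : ℂ :=
  (castForm (by omega)
    (wedge u ((Complex.I ^ ((n - p) ^ 2)) • wedge β (AltForm.conj η)))) (stdArgs b)

/-!
A real-alternating form of top degree `2n` on `V` is determined by its value at
`e₁, i•e₁, …, eₙ, i•eₙ`, where the standard volume form takes the value `2ⁿ > 0`: the sign
`(-1)^(n choose 2)` of the permutation un-interleaving these arguments cancels the powers
of `i`.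
Hence `u ∧ i^{q²} β ∧ β̄` is a positive volume form exactly when its coefficient
`hermCoeff β β` is a nonnegative real. Since `(β, η) ↦ hermCoeff β η` is sesquilinear,
polarization turns realness on the diagonal into Hermitian symmetry.
-/

def finUninterleave (n : ℕ) : Equiv.Perm (Fin (n + n)) where
  toFun j := if (j : ℕ) % 2 = 0 then Fin.castAdd n ⟨j / 2, by have := j.isLt; omega⟩
    else Fin.natAdd n ⟨j / 2, by have := j.isLt; omega⟩
  invFun j := if h : (j : ℕ) < n then ⟨2 * j, by omega⟩
    else ⟨2 * (j - n) + 1, by have := j.isLt; omega⟩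
  left_inv j := by
    have := j.isLt
    ext
    simp only [apply_ite Fin.val, apply_dite Fin.val]
    split_ifs <;> simp_all <;> omega
  right_inv j := by
    have := j.isLt
    ext
    simp only [apply_ite Fin.val, apply_dite Fin.val]
    split_ifs <;> simp_all; omega

lemma val_finUninterleave (n : ℕ) (j : Fin (n + n)) :
    (finUninterleave n j : ℕ) = if (j : ℕ) % 2 = 0 then (j : ℕ) / 2 else n + (j : ℕ) / 2 := by
  simp only [finUninterleave, Equiv.coe_fn_mk]
  split_ifs <;> simp [add_comm]

/-- Uninterleave the first `n` pairs in place; then the cycle `(n n+1 … 2n)` moves `2n` to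
position `n` and shifts the odd block up by one. -/
lemma finUninterleave_succ (n : ℕ) :
    finUninterleave (n + 1) =
      Fin.cycleIcc ⟨n, by omega⟩ ⟨n + n, by omega⟩ *
        (finUninterleave n).extendDomain (Fin.castLEEmb (by omega)).toEquivRange := by
  have hle : n + n ≤ n + 1 + (n + 1) := by omega
  ext j
  rw [Equiv.Perm.mul_apply]
  rcases lt_or_ge (j : ℕ) (n + n) with hj | hj
  · obtain ⟨i, rfl⟩ : ∃ i : Fin (n + n), j = Fin.castLE hle i := ⟨⟨j, hj⟩, rfl⟩
    have hext : (finUninterleave n).extendDomain (Fin.castLEEmb hle).toEquivRange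
        (Fin.castLE hle i) = Fin.castLE hle (finUninterleave n i) :=
      (finUninterleave n).extendDomain_apply_image _ i
    rw [hext]
    by_cases hpar : (i : ℕ) % 2 = 0
    · rw [Fin.cycleIcc_of_lt (by simp [Fin.lt_def, val_finUninterleave, hpar]; omega)]
      simp [val_finUninterleave, hpar]
    · rw [Fin.cycleIcc_of_ge_of_lt (by simp [Fin.le_def, val_finUninterleave, hpar])
        (by simp [Fin.lt_def, val_finUninterleave, hpar]; omega)]
      rw [Fin.val_add_one_of_lt (by simp [Fin.lt_def, val_finUninterleave, hpar]; omega)]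
      simp only [val_finUninterleave, Fin.val_castLE, hpar, if_false]
      omega
  · have hj' : j ∉ Set.range (Fin.castLEEmb hle) := by
      rintro ⟨i, rfl⟩
      simp only [Fin.castLEEmb_apply, Fin.val_castLE] at hj
      omega
    rw [Equiv.Perm.extendDomain_apply_not_subtype _ _ hj']
    rcases (by omega : (j : ℕ) = n + n ∨ (j : ℕ) = n + n + 1) with hj | hj
    · rw [show j = ⟨n + n, by omega⟩ from Fin.ext hj,
        Fin.cycleIcc_of_last (by simp [Fin.le_def])]
      simp only [val_finUninterleave]
      split_ifs <;> omega
    · rw [Fin.cycleIcc_of_gt (by simp [Fin.lt_def, hj])]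
      simp only [val_finUninterleave, hj]
      split_ifs <;> omega

lemma sign_finUninterleave (n : ℕ) :
    Equiv.Perm.sign (finUninterleave n) = (-1) ^ n.choose 2 := by
  induction n with
  | zero => rfl
  | succ n ih =>
    rw [finUninterleave_succ, Equiv.Perm.sign_mul,
      Fin.sign_cycleIcc_of_le (by simp [Fin.le_def]), Equiv.Perm.sign_extendDomain, ih]
    simp only [Nat.add_sub_cancel, Nat.choose_succ_succ', Nat.choose_one_right, pow_add]

lemma neg_one_pow_choose_two_mul_I_pow_sq (n : ℕ) :
    (-1 : ℂ) ^ n.choose 2 * (Complex.I ^ (n ^ 2) * (-(2 * Complex.I)) ^ n) = 2 ^ n := by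
  induction n with
  | zero => simp
  | succ n ih =>
    have hc : (n + 1).choose 2 = n + n.choose 2 := by
      rw [Nat.choose_succ_succ', Nat.choose_one_right]
    have hsq : (n + 1) ^ 2 = n ^ 2 + 2 * n + 1 := by ring
    rw [hc, hsq, pow_add, pow_add, pow_add, pow_mul, I_sq, pow_succ, pow_succ]
    have hsign : ((-1 : ℂ) ^ n) ^ 2 = 1 := by
      rw [← pow_mul, mul_comm, pow_mul, neg_one_sq, one_pow]
    linear_combination (-2 * Complex.I ^ 2 * ((-1) ^ n) ^ 2) * ih
      - 2 * 2 ^ n * ((-1) ^ n) ^ 2 * I_sq + 2 * 2 ^ n * hsign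

lemma LinearMap.conj_apply_eq_of_im_apply_self {M : Type*} [AddCommGroup M] [Module ℂ M]
    (B : M →ₗ[ℂ] M →ₗ⋆[ℂ] ℂ) (S : Submodule ℂ M) (h : ∀ x ∈ S, (B x x).im = 0)
    {x y : M} (hx : x ∈ S) (hy : y ∈ S) : starRingEnd ℂ (B x y) = B y x := by
  have hsum := h (x + y) (S.add_mem hx hy)
  have hsumI := h (x + Complex.I • y) (S.add_mem hx (S.smul_mem Complex.I hy))
  simp only [map_add, map_smul, LinearMap.map_smulₛₗ, LinearMap.add_apply, LinearMap.smul_apply,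
    smul_eq_mul, Complex.conj_I, add_re, add_im, mul_re, mul_im, I_re, I_im, neg_re, neg_im,
    h x hx, h y hy]
    at hsum hsumI
  apply Complex.ext <;> simp only [conj_re, conj_im] <;> linarith

namespace AltForm

variable {V : Type*} [AddCommGroup V] [Module ℂ V]

@[simp]
lemma conj_apply {k : ℕ} (u : AltForm V k) (v : Fin k → V) : conj u v = starRingEnd ℂ (u v) :=
  rfl

lemma conj_add {k : ℕ} (u v : AltForm V k) : conj (u + v) = conj u + conj v := by
  ext; simp

lemma conj_smul {k : ℕ} (c : ℂ) (u : AltForm V k) : conj (c • u) = starRingEnd ℂ c • conj u := by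
  ext; simp

lemma castForm_add {k l : ℕ} (h : k = l) (u v : AltForm V k) :
    castForm h (u + v) = castForm h u + castForm h v :=
  rfl

lemma castForm_smul {k l : ℕ} (h : k = l) (c : ℂ) (u : AltForm V k) :
    castForm h (c • u) = c • castForm h u :=
  rfl

lemma wedge_add_left {k l : ℕ} (u v : AltForm V k) (w : AltForm V l) :
    wedge (u + v) w = wedge u w + wedge v w := by
  simp only [wedge, ← AlternatingMap.domCoprod'_apply, TensorProduct.add_tmul, map_add]
  ext; simp

lemma wedge_add_right {k l : ℕ} (u : AltForm V k) (v w : AltForm V l) :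
    wedge u (v + w) = wedge u v + wedge u w := by
  simp only [wedge, ← AlternatingMap.domCoprod'_apply, TensorProduct.tmul_add, map_add]
  ext; simp

lemma comp_wedge {k l : ℕ} (L φ ψ : ℂ →ₗ[ℝ] ℂ) (h : ∀ x y, L (x * y) = φ x * ψ y)
    (u : AltForm V k) (v : AltForm V l) :
    L.compAlternatingMap (wedge u v) =
      wedge (φ.compAlternatingMap u) (ψ.compAlternatingMap v) := by
  ext x
  simp only [wedge, LinearMap.compAlternatingMap_apply, AlternatingMap.domDomCongr_apply,
    AlternatingMap.domCoprod_apply, sum_apply, map_sum]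
  refine Finset.sum_congr rfl fun σ _ => ?_
  induction σ using Quotient.inductionOn' with
  | h σ =>
    simp only [AlternatingMap.domCoprod.summand_mk'']
    rw [smul_apply, smul_apply]
    simp [h]

lemma smul_eq_mulLeft_comp {k : ℕ} (c : ℂ) (u : AltForm V k) :
    c • u = (LinearMap.mulLeft ℝ c).compAlternatingMap u :=
  rfl

lemma id_compAlternatingMap {k : ℕ} (u : AltForm V k) :
    (LinearMap.id : ℂ →ₗ[ℝ] ℂ).compAlternatingMap u = u :=
  rfl

lemma wedge_smul_left {k l : ℕ} (c : ℂ) (u : AltForm V k) (v : AltForm V l) :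
    wedge (c • u) v = c • wedge u v := by
  rw [smul_eq_mulLeft_comp c u, smul_eq_mulLeft_comp c (wedge u v),
    comp_wedge (LinearMap.mulLeft ℝ c) (LinearMap.mulLeft ℝ c) LinearMap.id
      (fun x y => by simp [mul_assoc]), id_compAlternatingMap]

lemma wedge_smul_right {k l : ℕ} (c : ℂ) (u : AltForm V k) (v : AltForm V l) :
    wedge u (c • v) = c • wedge u v := by
  rw [smul_eq_mulLeft_comp c v, smul_eq_mulLeft_comp c (wedge u v),
    comp_wedge (LinearMap.mulLeft ℝ c) LinearMap.id (LinearMap.mulLeft ℝ c)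
      (fun x y => by simp [mul_left_comm]), id_compAlternatingMap]

/-- The wedge product `ℓ 0 ∧ ⋯ ∧ ℓ (k-1)` of real-linear `1`-forms. -/
def prodForm {k : ℕ} (ℓ : Fin k → V →ₗ[ℝ] ℂ) : AltForm V k :=
  MultilinearMap.alternatization ((MultilinearMap.mkPiAlgebra ℝ (Fin k) ℂ).compLinearMap ℓ)

lemma prodForm_apply {k : ℕ} (ℓ : Fin k → V →ₗ[ℝ] ℂ) (v : Fin k → V) :
    prodForm ℓ v = (Matrix.of fun i j => ℓ j (v i)).det := by
  simp [prodForm, MultilinearMap.alternatization_apply, Matrix.det_apply]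

lemma wedgeFamily_eq_prodForm {k : ℕ} (f : Fin k → V →ₗ[ℂ] ℂ) :
    wedgeFamily f = prodForm fun j => (f j).restrictScalars ℝ := by
  ext v
  rw [prodForm_apply]
  rfl

lemma conj_prodForm {k : ℕ} (ℓ : Fin k → V →ₗ[ℝ] ℂ) :
    conj (prodForm ℓ) = prodForm fun j => Complex.conjAe.toLinearMap ∘ₗ ℓ j := by
  ext v
  rw [conj_apply, prodForm_apply, prodForm_apply, RingHom.map_det]
  rfl

lemma wedge_prodForm {k l : ℕ} (ℓ : Fin k → V →ₗ[ℝ] ℂ) (m : Fin l → V →ₗ[ℝ] ℂ) :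
    wedge (prodForm ℓ) (prodForm m) = prodForm (Fin.append ℓ m) := by
  ext v
  simp only [wedge, prodForm, ← MultilinearMap.domCoprod_alternization,
    AlternatingMap.domDomCongr_apply, LinearMap.compAlternatingMap_apply,
    MultilinearMap.alternatization_apply, map_sum]
  refine Fintype.sum_equiv (finSumFinEquiv.permCongr) _ _ fun σ => ?_
  simp only [Equiv.Perm.sign_permCongr, MultilinearMap.domDomCongr_apply,
    MultilinearMap.domCoprod_apply, MultilinearMap.compLinearMap_apply,
    MultilinearMap.mkPiAlgebra_apply]
  rw [← Fintype.prod_equiv finSumFinEquiv _ _ fun _ => rfl, Fintype.prod_sum_type]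
  simp [Equiv.permCongr_apply]

/-- `Λ^{p,q} V^∨`. -/
def typeSubmodule (p q : ℕ) : Submodule ℂ (AltForm V (p + q)) where
  carrier := {u | IsTypeForm p q u}
  add_mem' {u v} hu hv c w := by
    simp only [AlternatingMap.add_apply, hu c w, hv c w]
    ring
  zero_mem' c w := by simp
  smul_mem' a u hu c w := by
    simp only [AlternatingMap.smul_apply, hu c w, smul_eq_mul]
    ring

section

variable {n : ℕ}

lemma stdVol_eq_prodForm (b : Module.Basis (Fin n) ℂ V) :
    stdVol b = Complex.I ^ (n ^ 2) • prodForm (Fin.append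
      (fun i => (b.coord i).restrictScalars ℝ)
      (fun i => Complex.conjAe.toLinearMap ∘ₗ (b.coord i).restrictScalars ℝ)) := by
  rw [stdVol, wedgeFamily_eq_prodForm, conj_prodForm, wedge_prodForm]

lemma stdArgs_eq_comp (b : Module.Basis (Fin n) ℂ V) :
    stdArgs b = Fin.append ⇑b (fun k => Complex.I • b k) ∘ finUninterleave n := by
  funext j
  simp only [stdArgs, Function.comp_apply, finUninterleave, Equiv.coe_fn_mk]
  split_ifs <;> simp only [Fin.append_left, Fin.append_right]

lemma stdVol_apply_stdArgs (b : Module.Basis (Fin n) ℂ V) : stdVol b (stdArgs b) = 2 ^ n := by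
  have hblocks : (Matrix.of fun i j => Fin.append (fun l => (b.coord l).restrictScalars ℝ)
        (fun l => Complex.conjAe.toLinearMap ∘ₗ (b.coord l).restrictScalars ℝ) j
        (Fin.append ⇑b (fun k => Complex.I • b k) i)).submatrix finSumFinEquiv finSumFinEquiv =
      Matrix.fromBlocks 1 1 (Complex.I • 1) ((-Complex.I) • 1) := by
    ext (k | k) (l | l) <;>
      simp only [Matrix.submatrix_apply, Matrix.of_apply, finSumFinEquiv_apply_left,
        finSumFinEquiv_apply_right, Fin.append_left, Fin.append_right] <;>
      simp [Matrix.one_apply, Finsupp.single_apply, apply_ite (starRingEnd ℂ), neg_ite]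
  rw [stdArgs_eq_comp, AlternatingMap.map_perm, sign_finUninterleave, stdVol_eq_prodForm,
    AlternatingMap.smul_apply, prodForm_apply, ← Matrix.det_submatrix_equiv_self finSumFinEquiv,
    hblocks, Matrix.det_fromBlocks_one₁₁, mul_one, ← sub_smul, Matrix.det_smul, Matrix.det_one, mul_one, Fintype.card_fin,
    show -Complex.I - Complex.I = -(2 * Complex.I) by ring, smul_eq_mul, Units.smul_def,
    zsmul_eq_mul]
  push_cast
  exact neg_one_pow_choose_two_mul_I_pow_sq n

def realBasis (b : Module.Basis (Fin n) ℂ V) : Module.Basis (Fin (n + n)) ℝ V :=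
  (Complex.basisOneI.smulTower b).reindex
    ((Equiv.prodComm _ _).trans (finProdFinEquiv.trans (finCongr (Nat.mul_two n))))

lemma coe_realBasis (b : Module.Basis (Fin n) ℂ V) : ⇑(realBasis b) = stdArgs b := by
  funext j
  have hdiv : (Fin.cast (by omega) j : Fin (n * 2)).divNat = ⟨j / 2, by omega⟩ :=
    Fin.ext (by simp)
  simp only [realBasis, stdArgs, Module.Basis.reindex_apply, Module.Basis.smulTower_apply,
    Equiv.symm_trans_apply, finCongr_symm, finCongr_apply, finProdFinEquiv_symm_apply,
    Equiv.prodComm_symm, Equiv.prodComm_apply, Prod.swap_prod_mk, hdiv, Complex.coe_basisOneI]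
  split_ifs with h
  · have hmod : (Fin.cast (by omega) j : Fin (n * 2)).modNat = 0 := Fin.ext (by simpa using h)
    simp [hmod]
  · have hmod : (Fin.cast (by omega) j : Fin (n * 2)).modNat = 1 := Fin.ext (by simp; omega)
    simp [hmod]

/-- Every other evaluation at vectors of `realBasis b` permutes `stdArgs b` or repeats a vector. -/
lemma ext_stdArgs (b : Module.Basis (Fin n) ℂ V) {f g : AltForm V (n + n)}
    (h : f (stdArgs b) = g (stdArgs b)) : f = g := by
  refine (realBasis b).ext_alternating fun v hv => ?_
  let σ : Equiv.Perm (Fin (n + n)) := Equiv.ofBijective v (Finite.injective_iff_bijective.mp hv)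
  have hv : (fun i => realBasis b (v i)) = stdArgs b ∘ σ := by
    rw [coe_realBasis]
    rfl
  rw [hv, AlternatingMap.map_perm, AlternatingMap.map_perm, h]

lemma isPosVolume_iff (b : Module.Basis (Fin n) ℂ V) (ν : AltForm V (n + n)) :
    IsPosVolume b ν ↔ IsNonnegReal (ν (stdArgs b)) := by
  constructor
  · rintro ⟨τ, hτ, rfl⟩
    have hval : (τ • stdVol b) (stdArgs b) = ((τ * 2 ^ n : ℝ) : ℂ) := by
      simp [stdVol_apply_stdArgs]
    rw [hval]
    exact ⟨by simp only [ofReal_re]; positivity, ofReal_im _⟩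
  · rintro ⟨hre, him⟩
    refine ⟨(ν (stdArgs b)).re / 2 ^ n, by positivity, ext_stdArgs b ?_⟩
    rw [AlternatingMap.smul_apply, stdVol_apply_stdArgs, Complex.real_smul]
    apply Complex.ext <;> simp [him]

end

end AltForm

def hermForm {V : Type*} [AddCommGroup V] [Module ℂ V] {n p : ℕ} (hp : p ≤ n)
    (b : Module.Basis (Fin n) ℂ V) (u : AltForm V (p + p)) :
    AltForm V (n - p) →ₗ[ℂ] AltForm V (n - p) →ₗ⋆[ℂ] ℂ :=
  LinearMap.mk₂'ₛₗ (RingHom.id ℂ) (starRingEnd ℂ) (hermCoeff hp b u)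
    (fun β₁ β₂ η => by
      simp only [hermCoeff, wedge_add_left, smul_add, wedge_add_right, castForm_add,
        AlternatingMap.add_apply])
    (fun c β η => by
      simp only [hermCoeff, wedge_smul_left, smul_comm _ c, wedge_smul_right, castForm_smul,
        AlternatingMap.smul_apply, RingHom.id_apply])
    (fun β η₁ η₂ => by
      simp only [hermCoeff, conj_add, wedge_add_right, smul_add, castForm_add,
        AlternatingMap.add_apply])
    (fun c β η => by
      simp only [hermCoeff, conj_smul, wedge_smul_right, smul_comm _ (starRingEnd ℂ c),
        castForm_smul, AlternatingMap.smul_apply])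

theorem hermitian_positive_iff_psd_hermitian_form_general
    {V : Type*} [AddCommGroup V] [Module ℂ V] {n p : ℕ} (hp : p ≤ n)
    (b : Module.Basis (Fin n) ℂ V) (u : AltForm V (p + p)) :
    IsHermPosForm b hp u ↔
      ((∀ β η : AltForm V (n - p), IsTypeForm (n - p) 0 β → IsTypeForm (n - p) 0 η →
          (starRingEnd ℂ) (hermCoeff hp b u β η) = hermCoeff hp b u η β) ∧
        ∀ β : AltForm V (n - p), IsTypeForm (n - p) 0 β →
          IsNonnegReal (hermCoeff hp b u β β)) := by
  have hpos : IsHermPosForm b hp u ↔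
      ∀ β : AltForm V (n - p), IsTypeForm (n - p) 0 β → IsNonnegReal (hermCoeff hp b u β β) :=
    forall₂_congr fun β _ => isPosVolume_iff b _
  rw [hpos]
  refine ⟨fun hdiag => ⟨fun β η hβ hη => ?_, hdiag⟩, And.right⟩
  exact (hermForm hp b u).conj_apply_eq_of_im_apply_self (typeSubmodule (n - p) 0)
    (fun β hβ => (hdiag β hβ).2) hβ hη

/-- a real (p,p)-form is Hermitian positive iff
`(β,η) ↦ coefficient of u ∧ i^{q²} β ∧ η̄` is a positive semidefinite Hermitian
sesquilinear form on Λ^{q,0}V^∨ (Hermitian symmetry plus nonnegative diagonal). -/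
theorem hermitian_positive_iff_psd_hermitian_form
    {V : Type*} [AddCommGroup V] [Module ℂ V] {n p : ℕ} (hp : p ≤ n)
    (b : Module.Basis (Fin n) ℂ V) (u : AltForm V (p + p))
    (hreal : IsRealForm u) (htype : IsTypeForm p p u) :
    IsHermPosForm b hp u ↔
      ((∀ β η : AltForm V (n - p), IsTypeForm (n - p) 0 β → IsTypeForm (n - p) 0 η →
          (starRingEnd ℂ) (hermCoeff hp b u β η) = hermCoeff hp b u η β) ∧
        ∀ β : AltForm V (n - p), IsTypeForm (n - p) 0 β →
          IsNonnegReal (hermCoeff hp b u β β)) :=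
  hermitian_positive_iff_psd_hermitian_form_general hp b u
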